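/- Let ε ∈ (0,1), let Σ, Σ̂ ∈ ℝ^{d×d} be symmetric positive definite, and let u*, û ∈ ℝ^d satisfy ‖Σ^{1/2} u*‖ = 1 and ‖Σ̂^{1/2} û‖ = 1. If ‖Σ^{1/2} u* − Σ̂^{1/2} û‖² ≤ ε/8 and ‖I − Σ^{1/2} Σ̂^{-1/2}‖ ≤ √ε / 4, then u*ᵀ Σ û / ‖Σ^{1/2} û‖ ≥ 1 − ε. -/

import Mathlib

/-!
Put `a = Σ^{1/2} u*`, `b = Σ̂^{1/2} û` and `c = Σ^{1/2} û = (Σ^{1/2} Σ̂^{-1/2}) b`. Then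
`‖b - c‖ ≤ √ε / 4 < 1 = ‖b‖`, so `c ≠ 0`, and the quantity to bound is
`⟪a, c / ‖c‖⟫ = 1 - ‖a - c / ‖c‖‖² / 2`. Since `b` is a unit vector, normalizing `c` moves it
by at most `‖b - c‖` again, hence `‖a - c / ‖c‖‖ ≤ ‖a - b‖ + 2 ‖b - c‖ ≤ √(ε/8) + √ε / 2`,
whose square is at most `3ε/4`.
-/

open Matrix Finset

/-- Euclidean norm of a vector in `ℝ^d`. -/
noncomputable def vnorm {n : Type*} [Fintype n] (x : n → ℝ) : ℝ := Real.sqrt (x ⬝ᵥ x)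

/-- Spectral (operator) norm of a real matrix: the supremum of `‖A x‖` over unit vectors `x`. -/
noncomputable def specNorm {m n : Type*} [Fintype m] [Fintype n] (A : Matrix m n ℝ) : ℝ :=
  sSup {c : ℝ | ∃ x : n → ℝ, vnorm x = 1 ∧ c = vnorm (A.mulVec x)}

/-- The positive semidefinite square root of a positive semidefinite matrix (the definition
`Matrix.PosSemidef.sqrt` of the older Mathlib, since removed; here only for real matrices). -/
noncomputable def Matrix.PosSemidef.sqrt {n : Type*} [Fintype n] [DecidableEq n]
    {A : Matrix n n ℝ} (hA : A.PosSemidef) : Matrix n n ℝ :=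
  hA.isHermitian.eigenvectorUnitary.1 * diagonal ((↑) ∘ (√·) ∘ hA.isHermitian.eigenvalues) *
    (star hA.isHermitian.eigenvectorUnitary : Matrix n n ℝ)

open NormedSpace RealInnerProductSpace

section
variable {V : Type*} [NormedAddCommGroup V] [NormedSpace ℝ V]

lemma norm_sub_normalize_le_two_mul {b c : V} (hb : ‖b‖ = 1) :
    ‖b - normalize c‖ ≤ 2 * ‖b - c‖ := by
  rcases eq_or_ne c 0 with rfl | hc
  · simp [normalize_zero_eq_zero, hb]
  have hcn : ‖c - normalize c‖ = |‖c‖ - ‖b‖| := by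
    have hsplit : c - normalize c = (‖c‖ - 1) • normalize c := by
      rw [sub_smul, one_smul, norm_smul_normalize]
    rw [hsplit, norm_smul, norm_normalize_eq_one_iff.mpr hc, hb, Real.norm_eq_abs, mul_one]
  calc ‖b - normalize c‖ ≤ ‖b - c‖ + ‖c - normalize c‖ :=
        norm_sub_le_norm_sub_add_norm_sub _ _ _
    _ ≤ ‖b - c‖ + ‖c - b‖ := by rw [hcn]; gcongr; exact abs_norm_sub_norm_le c b
    _ = 2 * ‖b - c‖ := by rw [norm_sub_rev c b]; ring
end

section
variable {E : Type*} [NormedAddCommGroup E] [InnerProductSpace ℝ E]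

lemma real_inner_div_norm_eq_inner_normalize (a c : E) : ⟪a, c⟫ / ‖c‖ = ⟪a, normalize c⟫ := by
  rw [NormedSpace.normalize, real_inner_smul_right, div_eq_inv_mul]

lemma real_inner_eq_one_sub_norm_sub_sq_div_two {a b : E} (ha : ‖a‖ = 1) (hb : ‖b‖ = 1) :
    ⟪a, b⟫ = 1 - ‖a - b‖ ^ 2 / 2 := by
  rw [norm_sub_sq_real, ha, hb]; ring

theorem one_sub_sq_div_two_le_real_inner_div_norm {a b c : E} (ha : ‖a‖ = 1) (hb : ‖b‖ = 1)
    (hc : c ≠ 0) : 1 - (‖a - b‖ + 2 * ‖b - c‖) ^ 2 / 2 ≤ ⟪a, c⟫ / ‖c‖ := by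
  have hdist : ‖a - normalize c‖ ≤ ‖a - b‖ + 2 * ‖b - c‖ :=
    (norm_sub_le_norm_sub_add_norm_sub a b _).trans
      (by gcongr; exact norm_sub_normalize_le_two_mul hb)
  rw [real_inner_div_norm_eq_inner_normalize,
    real_inner_eq_one_sub_norm_sub_sq_div_two ha (norm_normalize_eq_one_iff.mpr hc)]
  gcongr
end

section
variable {n : Type*} [Fintype n]

lemma vnorm_eq_norm_toLp (x : n → ℝ) : vnorm x = ‖WithLp.toLp 2 x‖ := by
  rw [vnorm, EuclideanSpace.norm_eq]
  simp [dotProduct, sq]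

lemma dotProduct_eq_inner_toLp (x y : n → ℝ) : x ⬝ᵥ y = ⟪WithLp.toLp 2 x, WithLp.toLp 2 y⟫ := by
  simp [dotProduct, PiLp.inner_apply, mul_comm]

open scoped Matrix.Norms.L2Operator in
lemma vnorm_mulVec_le_specNorm {m : Type*} [Fintype m] (A : Matrix m n ℝ) {x : n → ℝ}
    (hx : vnorm x = 1) : vnorm (A *ᵥ x) ≤ specNorm A := by
  classical
  refine le_csSup ⟨‖A‖, ?_⟩ ⟨x, hx, rfl⟩
  rintro _ ⟨y, hy, rfl⟩
  have h := A.l2_opNorm_mulVec (WithLp.toLp 2 y)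
  rw [← vnorm_eq_norm_toLp y, hy, mul_one] at h
  exact (vnorm_eq_norm_toLp _).trans_le h

variable [DecidableEq n]

lemma Matrix.one_sub_mul_inv_mulVec_mulVec (A : Matrix n n ℝ) {B : Matrix n n ℝ} (hB : IsUnit B)
    (u : n → ℝ) : (1 - A * B⁻¹) *ᵥ (B *ᵥ u) = B *ᵥ u - A *ᵥ u := by
  rw [sub_mulVec, one_mulVec, mulVec_mulVec, Matrix.mul_assoc,
    nonsing_inv_mul B ((isUnit_iff_isUnit_det B).mp hB), Matrix.mul_one]

lemma Matrix.PosSemidef.sqrt_mul_self {A : Matrix n n ℝ} (hA : A.PosSemidef) :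
    hA.sqrt * hA.sqrt = A := by
  have hU := Matrix.UnitaryGroup.star_mul_self hA.isHermitian.eigenvectorUnitary
  have hsp := hA.isHermitian.spectral_theorem
  rw [Unitary.conjStarAlgAut_apply] at hsp
  unfold Matrix.PosSemidef.sqrt
  conv_rhs => rw [hsp]
  simp only [Matrix.mul_assoc]
  rw [← Matrix.mul_assoc (star _ : Matrix n n ℝ) _ _, hU, Matrix.one_mul,
    ← Matrix.mul_assoc (diagonal _) _ _, diagonal_mul_diagonal]
  congr 3
  funext i
  simp [Real.mul_self_sqrt (hA.eigenvalues_nonneg i)]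

lemma Matrix.PosSemidef.transpose_sqrt {A : Matrix n n ℝ} (hA : A.PosSemidef) :
    hA.sqrtᵀ = hA.sqrt := by
  simp [Matrix.PosSemidef.sqrt, Matrix.mul_assoc, star_eq_conjTranspose,
    conjTranspose_eq_transpose_of_trivial]

lemma Matrix.PosSemidef.dotProduct_mulVec_eq_sqrt {A : Matrix n n ℝ} (hA : A.PosSemidef)
    (x y : n → ℝ) : x ⬝ᵥ A *ᵥ y = hA.sqrt *ᵥ x ⬝ᵥ hA.sqrt *ᵥ y := by
  conv_lhs => rw [← hA.sqrt_mul_self, ← mulVec_mulVec, dotProduct_mulVec, ← mulVec_transpose,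
    hA.transpose_sqrt]

lemma Matrix.PosDef.isUnit_sqrt {A : Matrix n n ℝ} (hA : A.PosDef) :
    IsUnit hA.posSemidef.sqrt := by
  have h := hA.isUnit
  rw [← hA.posSemidef.sqrt_mul_self, isUnit_iff_isUnit_det, det_mul, IsUnit.mul_iff] at h
  exact (isUnit_iff_isUnit_det _).mpr h.1

end

/-- fixing the normalization: if `‖Σ^{1/2}u* − Σ̂^{1/2}û‖² ≤ ε/8` and
`‖I − Σ^{1/2}Σ̂^{-1/2}‖ ≤ √ε/4`, then the alignment `u*ᵀΣû/‖Σ^{1/2}û‖` is at least `1 − ε`. -/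
theorem stmt_12 {d : ℕ} (ε : ℝ) (hε : ε ∈ Set.Ioo (0 : ℝ) 1)
    (S Sh : Matrix (Fin d) (Fin d) ℝ) (hS : S.PosDef) (hSh : Sh.PosDef)
    (ustar uhat : Fin d → ℝ)
    (hus : vnorm (hS.posSemidef.sqrt.mulVec ustar) = 1)
    (huh : vnorm (hSh.posSemidef.sqrt.mulVec uhat) = 1)
    (h1 : vnorm (hS.posSemidef.sqrt.mulVec ustar - hSh.posSemidef.sqrt.mulVec uhat) ^ 2 ≤ ε / 8)
    (h2 : specNorm (1 - hS.posSemidef.sqrt * (hSh.posSemidef.sqrt)⁻¹) ≤ Real.sqrt ε / 4) :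
    ustar ⬝ᵥ S.mulVec uhat / vnorm (hS.posSemidef.sqrt.mulVec uhat) ≥ 1 - ε := by
  obtain ⟨hε0, hε1⟩ := hε
  set A := hS.posSemidef.sqrt
  set B := hSh.posSemidef.sqrt
  have hbc : vnorm (B *ᵥ uhat - A *ᵥ uhat) ≤ √ε / 4 := by
    rw [← A.one_sub_mul_inv_mulVec_mulVec hSh.isUnit_sqrt]
    exact (vnorm_mulVec_le_specNorm _ huh).trans h2
  rw [hS.posSemidef.dotProduct_mulVec_eq_sqrt, dotProduct_eq_inner_toLp]
  simp only [vnorm_eq_norm_toLp, WithLp.toLp_sub] at hus huh h1 hbc ⊢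
  set a := WithLp.toLp 2 (A *ᵥ ustar)
  set b := WithLp.toLp 2 (B *ᵥ uhat)
  set c := WithLp.toLp 2 (A *ᵥ uhat)
  have hc : c ≠ 0 := by
    rintro hc
    rw [hc, sub_zero, huh] at hbc
    nlinarith [Real.sq_sqrt hε0.le]
  have hbc_sq : ‖b - c‖ ^ 2 ≤ ε / 16 := by
    calc ‖b - c‖ ^ 2 ≤ (√ε / 4) ^ 2 := pow_le_pow_left₀ (norm_nonneg _) hbc 2
      _ = ε / 16 := by rw [div_pow, Real.sq_sqrt hε0.le]; norm_num
  refine le_trans ?_ (one_sub_sq_div_two_le_real_inner_div_norm hus huh hc)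
  nlinarith [add_sq_le (a := ‖a - b‖) (b := 2 * ‖b - c‖)]
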